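/- arXiv:1509.04790 — 2 statements merged into one kernel-verified Lean document; each statement's English description precedes it below -/
import Mathlib

section
/- The map ⋆ on MU_q(2,d) defined by (α^⋆)(F,F',v) = α(F',F,v) is a ℂ-algebra anti-automorphism, and on the Chevalley elements it satisfies e^⋆ = v^{−1}k'f = v·f·k', f^⋆ = v^{−1}ke = v·e·k, k^⋆ = k, (k')^⋆ = k', and ℓ^⋆ = ℓ. -/
open scoped BigOperators

namespace MirabolicSchur

variable (𝔽 : Type) [Field 𝔽] [Fintype 𝔽] (d : ℕ)

/-- The ambient vector space `𝔽_q^d`. -/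
abbrev Vd : Type := Fin d → 𝔽

/-- A 2-step flag `0 ⊆ F₁ ⊆ 𝔽_q^d` is determined by the middle subspace `F₁`. -/
abbrev Flag : Type := Submodule 𝔽 (Vd 𝔽 d)

instance : Finite (Flag 𝔽 d) :=
  Finite.of_injective (fun W => (W : Set (Vd 𝔽 d))) SetLike.coe_injective

noncomputable instance : Fintype (Flag 𝔽 d) := Fintype.ofFinite _

/-- Functions on triples (2-step flag, 2-step flag, vector); the mirabolic quantum
Schur algebra `MU_q(2,d)` is the subspace of `GL_d(𝔽_q)`-invariant such functions with
the convolution product `conv` below. -/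
abbrev MU : Type := Flag 𝔽 d × Flag 𝔽 d × Vd 𝔽 d → ℂ

/-- The convolution product. -/
noncomputable def conv (α β : MU 𝔽 d) : MU 𝔽 d := fun x =>
  ∑ H : Flag 𝔽 d, ∑ u : Vd 𝔽 d, α (x.1, H, u) * β (H, x.2.1, x.2.2 - u)

/-- The full 2-step flag `0 = F₀ ⊆ F₁ ⊆ F₂ = 𝔽_q^d` attached to `W = F₁`. -/
def step (W : Flag 𝔽 d) : Fin 3 → Submodule 𝔽 (Vd 𝔽 d) := ![⊥, W, ⊤]

/-- The relative position matrix, with `(i,j)` entry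
`a_{i+1,j+1} = dim (F_{i+1} ∩ F'_{j+1} / (F_{i+1} ∩ F'_j + F_i ∩ F'_{j+1}))`. -/
noncomputable def relpos (W W' : Flag 𝔽 d) : Matrix (Fin 2) (Fin 2) ℕ := fun i j =>
  Module.finrank 𝔽
    (↥(step 𝔽 d W i.succ ⊓ step 𝔽 d W' j.succ) ⧸
      ((step 𝔽 d W i.succ ⊓ step 𝔽 d W' j.castSucc ⊔
         step 𝔽 d W i.castSucc ⊓ step 𝔽 d W' j.succ).comap
        (step 𝔽 d W i.succ ⊓ step 𝔽 d W' j.succ).subtype))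

/-- The six possible decorations `Δ` for a `2 × 2` matrix. -/
inductive Dec : Type
  | none   -- `Δ = ∅`
  | d11    -- `Δ = {(1,1)}`
  | d12    -- `Δ = {(1,2)}`
  | d21    -- `Δ = {(2,1)}`
  | d1221  -- `Δ = {(1,2),(2,1)}`
  | d22    -- `Δ = {(2,2)}`

/-- The region of `𝔽_q^d` attached to a decoration `Δ` and a pair of flags. -/
def inRegion (W W' : Flag 𝔽 d) (v : Vd 𝔽 d) : Dec → Prop
  | Dec.none => v = 0
  | Dec.d11 => v ≠ 0 ∧ v ∈ W ⊓ W'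
  | Dec.d12 => v ∈ W ∧ v ∉ W ⊓ W'
  | Dec.d21 => v ∈ W' ∧ v ∉ W ⊓ W'
  | Dec.d1221 => v ∈ W ⊔ W' ∧ v ∉ W ∧ v ∉ W'
  | Dec.d22 => v ∉ W ⊔ W'

open Classical in
/-- The basis element `T_{A,Δ}`: the characteristic function of the set of triples
`(F,F',v)` with relative position matrix `A` and `v` in the region determined by `Δ`.
(It vanishes identically when the pair `(A,Δ)` is not admissible, e.g. when `A` has
a negative entry, matching the convention `T_{A,Δ} = 0`.) -/
noncomputable def T (A : Matrix (Fin 2) (Fin 2) ℤ) (Δ : Dec) : MU 𝔽 d := fun x =>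
  if (relpos 𝔽 d x.1 x.2.1).map (Nat.cast : ℕ → ℤ) = A ∧ inRegion 𝔽 d x.1 x.2.1 x.2.2 Δ
  then 1 else 0

/-- The elementary matrix `E_{i+1,j+1}`. -/
def E (i j : Fin 2) : Matrix (Fin 2) (Fin 2) ℤ := Matrix.single i j 1

/-- `q`, as a complex number. -/
def qc : ℂ := (Fintype.card 𝔽 : ℂ)

/-- The integer matrix attached to a matrix with natural entries. -/
def zc (A : Matrix (Fin 2) (Fin 2) ℕ) : Matrix (Fin 2) (Fin 2) ℤ :=
  A.map (Nat.cast : ℕ → ℤ)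

/-- The diagonal matrix `D(a,b)`. -/
def Dm (a b : ℤ) : Matrix (Fin 2) (Fin 2) ℤ := Matrix.of !![a, 0; 0, b]

/-- `e_r = T_{D(r,d-r-1)+E_{1,2},∅}`. -/
noncomputable def eel (r : ℕ) : MU 𝔽 d := T 𝔽 d (Dm r ((d:ℤ) - r - 1) + E 0 1) Dec.none

/-- `f_r = T_{D(r,d-r-1)+E_{2,1},∅}`. -/
noncomputable def fel (r : ℕ) : MU 𝔽 d := T 𝔽 d (Dm r ((d:ℤ) - r - 1) + E 1 0) Dec.none

/-- `1_r = T_{D(r,d-r),∅}`. -/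
noncomputable def oneel (r : ℕ) : MU 𝔽 d := T 𝔽 d (Dm r ((d:ℤ) - r)) Dec.none

/-- `x_r = T_{D(r,d-r),{(1,1)}}` (this function vanishes identically for `r = 0`,
matching the convention `x₀ = 0`). -/
noncomputable def xel (r : ℕ) : MU 𝔽 d := T 𝔽 d (Dm r ((d:ℤ) - r)) Dec.d11

/-- The quantum integer `[m] = (v^m - v^{-m})/(v - v⁻¹)`. -/
noncomputable def qint (v : ℂ) (m : ℤ) : ℂ := (v ^ m - v ^ (-m)) / (v - v⁻¹)

/-- The Chevalley generator `e = Σ_r v^{-r} e_r`. -/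
noncomputable def che (v : ℂ) : MU 𝔽 d :=
  ∑ r ∈ Finset.range d, (v ^ (-(r:ℤ))) • eel 𝔽 d r

/-- The Chevalley generator `f = Σ_r v^{1+r-d} f_r`. -/
noncomputable def chf (v : ℂ) : MU 𝔽 d :=
  ∑ r ∈ Finset.range d, (v ^ (1 + (r:ℤ) - d)) • fel 𝔽 d r

/-- The Chevalley generator `k = Σ_r v^{2r-d} 1_r`. -/
noncomputable def chk (v : ℂ) : MU 𝔽 d :=
  ∑ r ∈ Finset.range (d+1), (v ^ (2*(r:ℤ) - d)) • oneel 𝔽 d r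

/-- The Chevalley generator `k⁻¹ = Σ_r v^{d-2r} 1_r`. -/
noncomputable def chk' (v : ℂ) : MU 𝔽 d :=
  ∑ r ∈ Finset.range (d+1), (v ^ ((d:ℤ) - 2*r)) • oneel 𝔽 d r

/-- The Chevalley generator `ℓ = 1₀ + Σ_{r=1}^d v^{-2r} (1_r + x_r)`. -/
noncomputable def chl (v : ℂ) : MU 𝔽 d :=
  oneel 𝔽 d 0 +
    ∑ r ∈ Finset.range d, (v ^ (-2*((r:ℤ)+1))) • (oneel 𝔽 d (r+1) + xel 𝔽 d (r+1))

/-- `GL_d(𝔽_q)`-invariance of a function on triples; the invariant functions are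
exactly the elements of the mirabolic quantum Schur algebra `MU_q(2,d)`. -/
def Invariant (α : MU 𝔽 d) : Prop :=
  ∀ (g : Vd 𝔽 d ≃ₗ[𝔽] Vd 𝔽 d) (W W' : Flag 𝔽 d) (v : Vd 𝔽 d),
    α (W.map (g : Vd 𝔽 d →ₗ[𝔽] Vd 𝔽 d), W'.map (g : Vd 𝔽 d →ₗ[𝔽] Vd 𝔽 d), g v)
      = α (W, W', v)

open Classical in
/-- The unit of the convolution algebra: `Σ_D T_{D,∅}`, the characteristic function
of the triples `(F, F, 0)`. -/
noncomputable def convUnit : MU 𝔽 d := fun x =>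
  if x.1 = x.2.1 ∧ x.2.2 = 0 then 1 else 0

/-- The map `⋆ : α ↦ ((F,F',v) ↦ α(F',F,v))`. -/
def starMU (α : MU 𝔽 d) : MU 𝔽 d := fun x => α (x.2.1, x.1, x.2.2)

open Module
set_option synthInstance.maxHeartbeats 1000000
set_option maxHeartbeats 1000000
set_option linter.unusedSectionVars false

section Star
variable {𝔽 : Type} [Field 𝔽] [Fintype 𝔽] {d : ℕ}

lemma finrank_quot_congr (p p' q q' : Submodule 𝔽 (Vd 𝔽 d)) (hp : p = p') (hq : q = q') :
    (finrank 𝔽 (↥p ⧸ (q.comap p.subtype)) : ℕ) = (finrank 𝔽 (↥p' ⧸ (q'.comap p'.subtype)) : ℕ) := by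
  subst hp; subst hq; rfl

lemma finrank_quot_add (p q : Submodule 𝔽 (Vd 𝔽 d)) (h : q ≤ p) :
    (finrank 𝔽 (↥p ⧸ (q.comap p.subtype)) : ℕ) + finrank 𝔽 ↥q = finrank 𝔽 ↥p := by
  have e : finrank 𝔽 ↥(q.comap p.subtype) = finrank 𝔽 ↥q :=
    (Submodule.comapSubtypeEquivOfLe h).finrank_eq
  rw [← e]
  exact Submodule.finrank_quotient_add_finrank _

lemma relpos_00 (W W' : Flag 𝔽 d) : relpos 𝔽 d W W' 0 0 = finrank 𝔽 ↥(W ⊓ W') := by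
  unfold relpos
  rw [finrank_quot_congr (hp := show step 𝔽 d W (0:Fin 2).succ ⊓ step 𝔽 d W' (0:Fin 2).succ = W ⊓ W' from rfl)
    (hq := show step 𝔽 d W (0:Fin 2).succ ⊓ step 𝔽 d W' (0:Fin 2).castSucc ⊔
      step 𝔽 d W (0:Fin 2).castSucc ⊓ step 𝔽 d W' (0:Fin 2).succ = (⊥ : Submodule 𝔽 (Vd 𝔽 d)) by
        show W ⊓ ⊥ ⊔ ⊥ ⊓ W' = ⊥; simp)]
  have := finrank_quot_add (𝔽 := 𝔽) (d := d) (W ⊓ W') ⊥ bot_le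
  simpa using this

lemma relpos_01 (W W' : Flag 𝔽 d) :
    relpos 𝔽 d W W' 0 1 + finrank 𝔽 ↥(W ⊓ W') = finrank 𝔽 ↥W := by
  unfold relpos
  rw [finrank_quot_congr (hp := show step 𝔽 d W (0:Fin 2).succ ⊓ step 𝔽 d W' (1:Fin 2).succ = W from
      by show W ⊓ ⊤ = W; simp)
    (hq := show step 𝔽 d W (0:Fin 2).succ ⊓ step 𝔽 d W' (1:Fin 2).castSucc ⊔
      step 𝔽 d W (0:Fin 2).castSucc ⊓ step 𝔽 d W' (1:Fin 2).succ = W ⊓ W' by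
        show W ⊓ W' ⊔ ⊥ ⊓ ⊤ = W ⊓ W'; simp)]
  exact finrank_quot_add W (W ⊓ W') inf_le_left

lemma relpos_10 (W W' : Flag 𝔽 d) :
    relpos 𝔽 d W W' 1 0 + finrank 𝔽 ↥(W ⊓ W') = finrank 𝔽 ↥W' := by
  unfold relpos
  rw [finrank_quot_congr (hp := show step 𝔽 d W (1:Fin 2).succ ⊓ step 𝔽 d W' (0:Fin 2).succ = W' from
      by show ⊤ ⊓ W' = W'; simp)
    (hq := show step 𝔽 d W (1:Fin 2).succ ⊓ step 𝔽 d W' (0:Fin 2).castSucc ⊔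
      step 𝔽 d W (1:Fin 2).castSucc ⊓ step 𝔽 d W' (0:Fin 2).succ = W ⊓ W' by
        show ⊤ ⊓ ⊥ ⊔ W ⊓ W' = W ⊓ W'; simp)]
  exact finrank_quot_add W' (W ⊓ W') inf_le_right

lemma relpos_11 (W W' : Flag 𝔽 d) :
    relpos 𝔽 d W W' 1 1 + finrank 𝔽 ↥(W ⊔ W') = d := by
  unfold relpos
  rw [finrank_quot_congr (hp := show step 𝔽 d W (1:Fin 2).succ ⊓ step 𝔽 d W' (1:Fin 2).succ = ⊤ from
      by show ⊤ ⊓ ⊤ = (⊤ : Submodule 𝔽 (Vd 𝔽 d)); simp)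
    (hq := show step 𝔽 d W (1:Fin 2).succ ⊓ step 𝔽 d W' (1:Fin 2).castSucc ⊔
      step 𝔽 d W (1:Fin 2).castSucc ⊓ step 𝔽 d W' (1:Fin 2).succ = W ⊔ W' by
        show ⊤ ⊓ W' ⊔ W ⊓ ⊤ = W ⊔ W'; simp [sup_comm])]
  have h := finrank_quot_add (𝔽 := 𝔽) (d := d) ⊤ (W ⊔ W') le_top
  rw [h, finrank_top]
  exact Module.finrank_fin_fun 𝔽

end Star

section Star2
open scoped Matrix
variable {𝔽 : Type} [Field 𝔽] [Fintype 𝔽] {d : ℕ}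

lemma relpos_transpose (W W' : Flag 𝔽 d) : relpos 𝔽 d W' W = (relpos 𝔽 d W W')ᵀ := by
  ext i j
  show relpos 𝔽 d W' W i j = relpos 𝔽 d W W' j i
  unfold relpos
  exact finrank_quot_congr _ _ _ _ (inf_comm _ _)
    (by rw [sup_comm, inf_comm (step 𝔽 d W' i.castSucc), inf_comm (step 𝔽 d W' i.succ)])

lemma relpos_01_eq_zero_iff (W W' : Flag 𝔽 d) : relpos 𝔽 d W W' 0 1 = 0 ↔ W ≤ W' := by
  constructor
  · intro h
    have h2 := relpos_01 W W'
    rw [h, zero_add] at h2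
    have : W ⊓ W' = W := Submodule.eq_of_le_of_finrank_le inf_le_left (le_of_eq h2.symm)
    exact inf_eq_left.mp this
  · intro h
    have : W ⊓ W' = W := inf_eq_left.mpr h
    have h2 := relpos_01 W W'
    rw [this] at h2
    omega

lemma relpos_10_eq_zero_iff (W W' : Flag 𝔽 d) : relpos 𝔽 d W W' 1 0 = 0 ↔ W' ≤ W := by
  constructor
  · intro h
    have h2 := relpos_10 W W'
    rw [h, zero_add] at h2
    have : W ⊓ W' = W' := Submodule.eq_of_le_of_finrank_le inf_le_right (le_of_eq h2.symm)
    exact inf_eq_right.mp this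
  · intro h
    have : W ⊓ W' = W' := inf_eq_right.mpr h
    have h2 := relpos_10 W W'
    rw [this] at h2
    omega

lemma DmE01 (a b : ℤ) : Dm a b + E 0 1 = Matrix.of !![a, 1; 0, b] := by
  ext i j
  fin_cases i <;> fin_cases j <;> simp [Dm, E, Matrix.single] <;> rfl

lemma DmE10 (a b : ℤ) : Dm a b + E 1 0 = Matrix.of !![a, 0; 1, b] := by
  ext i j
  fin_cases i <;> fin_cases j <;> simp [Dm, E, Matrix.single] <;> rfl

lemma Dm_eq (a b : ℤ) : Dm a b = Matrix.of !![a, 0; 0, b] := rfl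

lemma of_transpose (a b c e : ℤ) : (Matrix.of !![a, b; c, e])ᵀ = Matrix.of !![a, c; b, e] := by
  ext i j
  fin_cases i <;> fin_cases j <;> rfl

lemma map_eq_of_iff (M : Matrix (Fin 2) (Fin 2) ℕ) (a b c e : ℤ) :
    M.map (Nat.cast : ℕ → ℤ) = Matrix.of !![a, b; c, e] ↔
      ((M 0 0 : ℤ) = a ∧ (M 0 1 : ℤ) = b ∧ (M 1 0 : ℤ) = c ∧ (M 1 1 : ℤ) = e) := by
  constructor
  · intro h
    refine ⟨?_, ?_, ?_, ?_⟩ <;>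
      · rw [show (M _ _ : ℤ) = M.map (Nat.cast : ℕ → ℤ) _ _ from rfl, h]; rfl
  · rintro ⟨h1, h2, h3, h4⟩
    ext i j
    fin_cases i <;> fin_cases j <;> simp [Matrix.map_apply, h1, h2, h3, h4] <;> rfl

end Star2

section Star3
open scoped Matrix
variable {𝔽 : Type} [Field 𝔽] [Fintype 𝔽] {d : ℕ}

lemma relpos_diag_iff (W W' : Flag 𝔽 d) (s : ℕ) :
    (relpos 𝔽 d W W').map (Nat.cast : ℕ → ℤ) = Dm s ((d:ℤ) - s) ↔
      (W = W' ∧ finrank 𝔽 ↥W = s) := by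
  rw [Dm_eq, map_eq_of_iff]
  constructor
  · rintro ⟨h1, h2, h3, -⟩
    have h2' : relpos 𝔽 d W W' 0 1 = 0 := by exact_mod_cast h2
    have h3' : relpos 𝔽 d W W' 1 0 = 0 := by exact_mod_cast h3
    have hWW' : W = W' :=
      le_antisymm ((relpos_01_eq_zero_iff W W').mp h2') ((relpos_10_eq_zero_iff W W').mp h3')
    refine ⟨hWW', ?_⟩
    have e0 := relpos_00 W W'
    have e1 := relpos_01 W W'
    omega
  · rintro ⟨hWW', hs⟩
    have hle : W ≤ W' := le_of_eq hWW'
    have hge : W' ≤ W := ge_of_eq hWW'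
    have hinf : W ⊓ W' = W := inf_eq_left.mpr hle
    have hsup : W ⊔ W' = W := sup_eq_left.mpr hge
    have e0 := relpos_00 W W'
    rw [hinf] at e0
    have e1 := (relpos_01_eq_zero_iff W W').mpr hle
    have e2 := (relpos_10_eq_zero_iff W W').mpr hge
    have e3 := relpos_11 W W'
    rw [hsup] at e3
    refine ⟨by omega, by omega, by omega, by omega⟩

open Classical in
lemma oneel_apply (s : ℕ) (x : Flag 𝔽 d × Flag 𝔽 d × Vd 𝔽 d) :
    oneel 𝔽 d s x =
      if x.1 = x.2.1 ∧ finrank 𝔽 ↥x.1 = s ∧ x.2.2 = 0 then 1 else 0 := by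
  unfold oneel T
  classical
  refine if_congr ?_ rfl rfl
  rw [relpos_diag_iff]
  show _ ∧ x.2.2 = 0 ↔ _
  tauto

lemma starMU_T_none (A : Matrix (Fin 2) (Fin 2) ℤ) :
    starMU 𝔽 d (T 𝔽 d A Dec.none) = T 𝔽 d Aᵀ Dec.none := by
  funext x
  unfold starMU T
  classical
  refine if_congr (and_congr ?_ Iff.rfl) rfl rfl
  rw [relpos_transpose, Matrix.transpose_map]
  constructor
  · intro h; rw [← h, Matrix.transpose_transpose]
  · intro h; rw [h, Matrix.transpose_transpose]

lemma starMU_T_d11 (A : Matrix (Fin 2) (Fin 2) ℤ) :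
    starMU 𝔽 d (T 𝔽 d A Dec.d11) = T 𝔽 d Aᵀ Dec.d11 := by
  funext x
  unfold starMU T
  classical
  refine if_congr (and_congr ?_ ?_) rfl rfl
  · rw [relpos_transpose, Matrix.transpose_map]
    constructor
    · intro h; rw [← h, Matrix.transpose_transpose]
    · intro h; rw [h, Matrix.transpose_transpose]
  · show _ ≠ 0 ∧ _ ∈ x.2.1 ⊓ x.1 ↔ _ ≠ 0 ∧ _ ∈ x.1 ⊓ x.2.1
    rw [inf_comm]

lemma fel_support (r : ℕ) (x : Flag 𝔽 d × Flag 𝔽 d × Vd 𝔽 d) (h : fel 𝔽 d r x ≠ 0) :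
    finrank 𝔽 ↥x.1 = r ∧ finrank 𝔽 ↥x.2.1 = r + 1 := by
  unfold fel T at h
  rw [DmE10] at h
  by_cases hc : (relpos 𝔽 d x.1 x.2.1).map (Nat.cast : ℕ → ℤ) = Matrix.of !![(r:ℤ), 0; 1, (d:ℤ) - r - 1]
      ∧ inRegion 𝔽 d x.1 x.2.1 x.2.2 Dec.none
  · obtain ⟨hm, -⟩ := hc
    rw [map_eq_of_iff] at hm
    obtain ⟨h1, h2, h3, -⟩ := hm
    have e0 := relpos_00 x.1 x.2.1
    have e1 := relpos_01 x.1 x.2.1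
    have e2 := relpos_10 x.1 x.2.1
    constructor <;> omega
  · exact absurd (if_neg hc) h

lemma eel_support (r : ℕ) (x : Flag 𝔽 d × Flag 𝔽 d × Vd 𝔽 d) (h : eel 𝔽 d r x ≠ 0) :
    finrank 𝔽 ↥x.1 = r + 1 ∧ finrank 𝔽 ↥x.2.1 = r := by
  unfold eel T at h
  rw [DmE01] at h
  by_cases hc : (relpos 𝔽 d x.1 x.2.1).map (Nat.cast : ℕ → ℤ) = Matrix.of !![(r:ℤ), 1; 0, (d:ℤ) - r - 1]
      ∧ inRegion 𝔽 d x.1 x.2.1 x.2.2 Dec.none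
  · obtain ⟨hm, -⟩ := hc
    rw [map_eq_of_iff] at hm
    obtain ⟨h1, h2, h3, -⟩ := hm
    have e0 := relpos_00 x.1 x.2.1
    have e1 := relpos_01 x.1 x.2.1
    have e2 := relpos_10 x.1 x.2.1
    constructor <;> omega
  · exact absurd (if_neg hc) h

lemma starMU_eel (r : ℕ) : starMU 𝔽 d (eel 𝔽 d r) = fel 𝔽 d r := by
  unfold eel fel
  rw [starMU_T_none, DmE01, DmE10, of_transpose]

lemma starMU_fel (r : ℕ) : starMU 𝔽 d (fel 𝔽 d r) = eel 𝔽 d r := by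
  unfold eel fel
  rw [starMU_T_none, DmE01, DmE10, of_transpose]

lemma starMU_oneel (r : ℕ) : starMU 𝔽 d (oneel 𝔽 d r) = oneel 𝔽 d r := by
  unfold oneel
  rw [starMU_T_none, Dm_eq, of_transpose]

lemma starMU_xel (r : ℕ) : starMU 𝔽 d (xel 𝔽 d r) = xel 𝔽 d r := by
  unfold xel
  rw [starMU_T_d11, Dm_eq, of_transpose]

end Star3

section Star4
open scoped Matrix
variable {𝔽 : Type} [Field 𝔽] [Fintype 𝔽] {d : ℕ}

lemma starMU_involutive : Function.Involutive (starMU 𝔽 d) := fun _ => rfl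

lemma starMU_add (α β : MU 𝔽 d) : starMU 𝔽 d (α + β) = starMU 𝔽 d α + starMU 𝔽 d β := rfl

lemma starMU_smul (c : ℂ) (α : MU 𝔽 d) : starMU 𝔽 d (c • α) = c • starMU 𝔽 d α := rfl

lemma starMU_sum {ι : Type*} (s : Finset ι) (f : ι → MU 𝔽 d) :
    starMU 𝔽 d (∑ i ∈ s, f i) = ∑ i ∈ s, starMU 𝔽 d (f i) := by
  funext x
  simp [starMU, Finset.sum_apply]

lemma starMU_convUnit : starMU 𝔽 d (convUnit 𝔽 d) = convUnit 𝔽 d := by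
  funext x
  unfold starMU convUnit
  classical
  refine if_congr (and_congr ?_ Iff.rfl) rfl rfl
  exact eq_comm

lemma starMU_conv (α β : MU 𝔽 d) :
    starMU 𝔽 d (conv 𝔽 d α β) = conv 𝔽 d (starMU 𝔽 d β) (starMU 𝔽 d α) := by
  funext x
  unfold starMU conv
  refine Finset.sum_congr rfl fun H _ => ?_
  have h := Equiv.sum_comp (Equiv.subLeft x.2.2)
    (fun u => β (H, x.1, u) * α (x.2.1, H, x.2.2 - u))
  simp only [Equiv.subLeft_apply, sub_sub_cancel] at h
  rw [← h]
  refine Finset.sum_congr rfl fun u _ => ?_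
  exact mul_comm _ _

lemma conv_smul_left (c : ℂ) (α β : MU 𝔽 d) :
    conv 𝔽 d (c • α) β = c • conv 𝔽 d α β := by
  funext x
  simp [conv, Finset.mul_sum, mul_assoc]

lemma conv_smul_right (c : ℂ) (α β : MU 𝔽 d) :
    conv 𝔽 d α (c • β) = c • conv 𝔽 d α β := by
  funext x
  simp only [conv, Pi.smul_apply, smul_eq_mul, Finset.mul_sum]
  refine Finset.sum_congr rfl fun H _ => Finset.sum_congr rfl fun u _ => ?_
  ring

lemma conv_sum_left {ι : Type*} (s : Finset ι) (f : ι → MU 𝔽 d) (β : MU 𝔽 d) :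
    conv 𝔽 d (∑ i ∈ s, f i) β = ∑ i ∈ s, conv 𝔽 d (f i) β := by
  funext x
  simp only [conv, Finset.sum_apply, Finset.sum_mul]
  exact Eq.trans (Finset.sum_congr rfl fun H _ => Finset.sum_comm) Finset.sum_comm

lemma conv_sum_right {ι : Type*} (s : Finset ι) (f : ι → MU 𝔽 d) (α : MU 𝔽 d) :
    conv 𝔽 d α (∑ i ∈ s, f i) = ∑ i ∈ s, conv 𝔽 d α (f i) := by
  funext x
  simp only [conv, Finset.sum_apply, Finset.mul_sum]
  exact Eq.trans (Finset.sum_congr rfl fun H _ => Finset.sum_comm) Finset.sum_comm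

open Classical in
lemma conv_oneel_left (s : ℕ) (α : MU 𝔽 d) (x : Flag 𝔽 d × Flag 𝔽 d × Vd 𝔽 d) :
    conv 𝔽 d (oneel 𝔽 d s) α x = if finrank 𝔽 ↥x.1 = s then α x else 0 := by
  unfold conv
  simp only [oneel_apply]
  rw [Finset.sum_eq_single x.1]
  · rw [Finset.sum_eq_single (0 : Vd 𝔽 d)]
    · by_cases h : finrank 𝔽 ↥x.1 = s
      · simp [h]
      · simp [h]
    · intro u _ hu
      rw [if_neg (by tauto), zero_mul]
    · simp
  · intro H _ hH
    apply Finset.sum_eq_zero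
    intro u _
    rw [if_neg (by tauto), zero_mul]
  · simp

open Classical in
lemma conv_oneel_right (s : ℕ) (α : MU 𝔽 d) (x : Flag 𝔽 d × Flag 𝔽 d × Vd 𝔽 d) :
    conv 𝔽 d α (oneel 𝔽 d s) x = if finrank 𝔽 ↥x.2.1 = s then α x else 0 := by
  unfold conv
  simp only [oneel_apply]
  rw [Finset.sum_eq_single x.2.1]
  · rw [Finset.sum_eq_single x.2.2]
    · by_cases h : finrank 𝔽 ↥x.2.1 = s
      · simp [h]
      · simp [h]
    · intro u _ hu
      have hne : ¬(x.2.1 = x.2.1 ∧ finrank 𝔽 ↥x.2.1 = s ∧ x.2.2 - u = 0) := by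
        rintro ⟨-, -, h⟩
        exact hu (sub_eq_zero.mp h).symm
      rw [if_neg hne, mul_zero]
    · simp
  · intro H _ hH
    apply Finset.sum_eq_zero
    intro u _
    rw [if_neg (by tauto), mul_zero]
  · simp

end Star4

section Star5
variable {𝔽 : Type} [Field 𝔽] [Fintype 𝔽] {d : ℕ}

open Classical in
lemma conv_oneel_fel (s r : ℕ) :
    conv 𝔽 d (oneel 𝔽 d s) (fel 𝔽 d r) = if r = s then fel 𝔽 d r else 0 := by
  funext x
  rw [conv_oneel_left]
  by_cases h : fel 𝔽 d r x = 0
  · by_cases hrs : r = s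
    · subst hrs; simp [h, apply_ite (fun f : MU 𝔽 d => f x)]
    · simp [h, hrs, apply_ite (fun f : MU 𝔽 d => f x)]
  · have hr := (fel_support r x h).1
    by_cases hrs : r = s
    · subst hrs; simp [hr, apply_ite (fun f : MU 𝔽 d => f x)]
    · have hne : finrank 𝔽 ↥x.1 ≠ s := by rw [hr]; exact hrs
      simp [hne, hrs, apply_ite (fun f : MU 𝔽 d => f x)]

open Classical in
lemma conv_fel_oneel (s r : ℕ) :
    conv 𝔽 d (fel 𝔽 d r) (oneel 𝔽 d s) = if r + 1 = s then fel 𝔽 d r else 0 := by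
  funext x
  rw [conv_oneel_right]
  by_cases h : fel 𝔽 d r x = 0
  · by_cases hrs : r + 1 = s
    · subst hrs; simp [h, apply_ite (fun f : MU 𝔽 d => f x)]
    · simp [h, hrs, apply_ite (fun f : MU 𝔽 d => f x)]
  · have hr := (fel_support r x h).2
    by_cases hrs : r + 1 = s
    · subst hrs; simp [hr, apply_ite (fun f : MU 𝔽 d => f x)]
    · have hne : finrank 𝔽 ↥x.2.1 ≠ s := by rw [hr]; exact hrs
      simp [hne, hrs, apply_ite (fun f : MU 𝔽 d => f x)]

open Classical in
lemma conv_oneel_eel (s r : ℕ) :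
    conv 𝔽 d (oneel 𝔽 d s) (eel 𝔽 d r) = if r + 1 = s then eel 𝔽 d r else 0 := by
  funext x
  rw [conv_oneel_left]
  by_cases h : eel 𝔽 d r x = 0
  · by_cases hrs : r + 1 = s
    · subst hrs; simp [h, apply_ite (fun f : MU 𝔽 d => f x)]
    · simp [h, hrs, apply_ite (fun f : MU 𝔽 d => f x)]
  · have hr := (eel_support r x h).1
    by_cases hrs : r + 1 = s
    · subst hrs; simp [hr, apply_ite (fun f : MU 𝔽 d => f x)]
    · have hne : finrank 𝔽 ↥x.1 ≠ s := by rw [hr]; exact hrs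
      simp [hne, hrs, apply_ite (fun f : MU 𝔽 d => f x)]

open Classical in
lemma conv_eel_oneel (s r : ℕ) :
    conv 𝔽 d (eel 𝔽 d r) (oneel 𝔽 d s) = if r = s then eel 𝔽 d r else 0 := by
  funext x
  rw [conv_oneel_right]
  by_cases h : eel 𝔽 d r x = 0
  · by_cases hrs : r = s
    · subst hrs; simp [h, apply_ite (fun f : MU 𝔽 d => f x)]
    · simp [h, hrs, apply_ite (fun f : MU 𝔽 d => f x)]
  · have hr := (eel_support r x h).2
    by_cases hrs : r = s
    · subst hrs; simp [hr, apply_ite (fun f : MU 𝔽 d => f x)]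
    · have hne : finrank 𝔽 ↥x.2.1 ≠ s := by rw [hr]; exact hrs
      simp [hne, hrs, apply_ite (fun f : MU 𝔽 d => f x)]

end Star5

section Star6
variable {𝔽 : Type} [Field 𝔽] [Fintype 𝔽] {d : ℕ}

lemma star_che (v : ℂ) (hv0 : v ≠ 0) :
    starMU 𝔽 d (che 𝔽 d v) = v⁻¹ • conv 𝔽 d (chk' 𝔽 d v) (chf 𝔽 d v) := by
  unfold che chk' chf
  rw [starMU_sum]
  simp only [starMU_smul, starMU_eel]
  simp only [conv_sum_left, conv_smul_left, conv_sum_right, conv_smul_right,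
    conv_oneel_fel, Finset.smul_sum]
  refine Finset.sum_congr rfl fun r hr => ?_
  rw [Finset.mem_range] at hr
  have hmem : r ∈ Finset.range (d + 1) := Finset.mem_range.mpr (by omega)
  simp only [smul_ite, smul_zero]
  rw [Finset.sum_ite_eq, if_pos hmem]
  simp only [smul_smul]
  congr 1
  rw [← zpow_neg_one v, ← zpow_add₀ hv0, ← zpow_add₀ hv0]
  congr 1
  ring

lemma star_che' (v : ℂ) (hv0 : v ≠ 0) :
    starMU 𝔽 d (che 𝔽 d v) = v • conv 𝔽 d (chf 𝔽 d v) (chk' 𝔽 d v) := by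
  unfold che chk' chf
  rw [starMU_sum]
  simp only [starMU_smul, starMU_eel]
  simp only [conv_sum_left, conv_smul_left, conv_sum_right, conv_smul_right,
    conv_fel_oneel, Finset.smul_sum]
  rw [Finset.sum_comm]
  refine Finset.sum_congr rfl fun r hr => ?_
  rw [Finset.mem_range] at hr
  have hmem : r + 1 ∈ Finset.range (d + 1) := Finset.mem_range.mpr (by omega)
  simp only [smul_ite, smul_zero]
  rw [Finset.sum_ite_eq, if_pos hmem]
  simp only [smul_smul]
  congr 1
  have hz : ∀ a b : ℤ, v ^ a * v ^ b = v ^ (a + b) := fun a b => (zpow_add₀ hv0 a b).symm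
  have hz1 : ∀ c : ℤ, v * v ^ c = v ^ (1 + c) := fun c => by rw [zpow_add₀ hv0, zpow_one]
  rw [hz, hz1]
  congr 1
  push_cast
  ring

lemma star_chf (v : ℂ) (hv0 : v ≠ 0) :
    starMU 𝔽 d (chf 𝔽 d v) = v⁻¹ • conv 𝔽 d (chk 𝔽 d v) (che 𝔽 d v) := by
  unfold che chk chf
  rw [starMU_sum]
  simp only [starMU_smul, starMU_fel]
  simp only [conv_sum_left, conv_smul_left, conv_sum_right, conv_smul_right,
    conv_oneel_eel, Finset.smul_sum]
  refine Finset.sum_congr rfl fun r hr => ?_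
  rw [Finset.mem_range] at hr
  have hmem : r + 1 ∈ Finset.range (d + 1) := Finset.mem_range.mpr (by omega)
  simp only [smul_ite, smul_zero]
  rw [Finset.sum_ite_eq, if_pos hmem]
  simp only [smul_smul]
  congr 1
  rw [← zpow_neg_one v, ← zpow_add₀ hv0, ← zpow_add₀ hv0]
  congr 1
  push_cast
  ring

lemma star_chf' (v : ℂ) (hv0 : v ≠ 0) :
    starMU 𝔽 d (chf 𝔽 d v) = v • conv 𝔽 d (che 𝔽 d v) (chk 𝔽 d v) := by
  unfold che chk chf
  rw [starMU_sum]
  simp only [starMU_smul, starMU_fel]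
  simp only [conv_sum_left, conv_smul_left, conv_sum_right, conv_smul_right,
    conv_eel_oneel, Finset.smul_sum]
  rw [Finset.sum_comm]
  refine Finset.sum_congr rfl fun r hr => ?_
  rw [Finset.mem_range] at hr
  have hmem : r ∈ Finset.range (d + 1) := Finset.mem_range.mpr (by omega)
  simp only [smul_ite, smul_zero]
  rw [Finset.sum_ite_eq, if_pos hmem]
  simp only [smul_smul]
  congr 1
  have hz : ∀ a b : ℤ, v ^ a * v ^ b = v ^ (a + b) := fun a b => (zpow_add₀ hv0 a b).symm
  have hz1 : ∀ c : ℤ, v * v ^ c = v ^ (1 + c) := fun c => by rw [zpow_add₀ hv0, zpow_one]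
  rw [hz, hz1]
  congr 1
  push_cast
  ring

lemma star_chk (v : ℂ) : starMU 𝔽 d (chk 𝔽 d v) = chk 𝔽 d v := by
  unfold chk
  rw [starMU_sum]
  simp only [starMU_smul, starMU_oneel]

lemma star_chk' (v : ℂ) : starMU 𝔽 d (chk' 𝔽 d v) = chk' 𝔽 d v := by
  unfold chk'
  rw [starMU_sum]
  simp only [starMU_smul, starMU_oneel]

lemma star_chl (v : ℂ) : starMU 𝔽 d (chl 𝔽 d v) = chl 𝔽 d v := by
  unfold chl
  rw [starMU_add, starMU_sum, starMU_oneel]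
  simp only [starMU_smul, starMU_add, starMU_oneel, starMU_xel]

end Star6

/-- `⋆` is a ℂ-algebra anti-automorphism of the convolution algebra, and on the
Chevalley elements it is given by `e^⋆ = v⁻¹k⁻¹f = v f k⁻¹`, `f^⋆ = v⁻¹ke = v e k`,
`k^⋆ = k`, `(k⁻¹)^⋆ = k⁻¹`, `ℓ^⋆ = ℓ`. -/
theorem star_antiautomorphism (hd : 0 < d) (v : ℂ) (hv : v ^ 2 = qc 𝔽) :
    Function.Bijective (starMU 𝔽 d) ∧
    (∀ α β : MU 𝔽 d, starMU 𝔽 d (α + β) = starMU 𝔽 d α + starMU 𝔽 d β) ∧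
    (∀ (c : ℂ) (α : MU 𝔽 d), starMU 𝔽 d (c • α) = c • starMU 𝔽 d α) ∧
    (starMU 𝔽 d (convUnit 𝔽 d) = convUnit 𝔽 d) ∧
    (∀ α β : MU 𝔽 d, starMU 𝔽 d (conv 𝔽 d α β)
      = conv 𝔽 d (starMU 𝔽 d β) (starMU 𝔽 d α)) ∧
    (starMU 𝔽 d (che 𝔽 d v) = v⁻¹ • conv 𝔽 d (chk' 𝔽 d v) (chf 𝔽 d v)) ∧
    (starMU 𝔽 d (che 𝔽 d v) = v • conv 𝔽 d (chf 𝔽 d v) (chk' 𝔽 d v)) ∧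
    (starMU 𝔽 d (chf 𝔽 d v) = v⁻¹ • conv 𝔽 d (chk 𝔽 d v) (che 𝔽 d v)) ∧
    (starMU 𝔽 d (chf 𝔽 d v) = v • conv 𝔽 d (che 𝔽 d v) (chk 𝔽 d v)) ∧
    (starMU 𝔽 d (chk 𝔽 d v) = chk 𝔽 d v) ∧
    (starMU 𝔽 d (chk' 𝔽 d v) = chk' 𝔽 d v) ∧
    (starMU 𝔽 d (chl 𝔽 d v) = chl 𝔽 d v) := by
  have hq0 : qc 𝔽 ≠ 0 := by
    simp only [qc, ne_eq, Nat.cast_eq_zero]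
    exact Fintype.card_ne_zero
  have hv0 : v ≠ 0 := by
    intro h
    rw [h] at hv
    simp only [ne_eq, zero_pow, OfNat.ofNat_ne_zero, not_false_eq_true] at hv
    exact hq0 hv.symm
  exact ⟨starMU_involutive.bijective, fun α β => starMU_add α β, fun c α => starMU_smul c α,
    starMU_convUnit, fun α β => starMU_conv α β, star_che v hv0, star_che' v hv0,
    star_chf v hv0, star_chf' v hv0, star_chk v, star_chk' v, star_chl v⟩

end MirabolicSchur
end

section
/- For all a, b ∈ ℕ, the following identities hold in MU_v(2): [a+b]·e^a·ℓ·e^b = v^{−b}[a]·e^{a+b}·ℓ + v^{a}[b]·ℓ·e^{a+b}, and [a+b]·f^a·ℓ·f^b = v^{b}[a]·f^{a+b}·ℓ + v^{−a}[b]·ℓ·f^{a+b}. (Equivalently, for a+b ≥ 1, e^aℓe^b = (v^{−b}[a]/[a+b])e^{a+b}ℓ + (v^a[b]/[a+b])ℓe^{a+b}, and similarly for f.) -/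
namespace MirabolicSL2

noncomputable section

/-- The base field `K = ℂ(v)`. -/
abbrev K : Type := RatFunc ℂ

/-- The variable `v ∈ ℂ(v)`. -/
def vv : K := RatFunc.X

/-- The quantum integer `[m] = (v^m - v^{-m})/(v - v⁻¹)`. -/
def qn (m : ℤ) : K := (vv ^ m - vv ^ (-m)) / (vv - vv⁻¹)

/-- The five generators `e, f, k, k⁻¹, ℓ` of mirabolic quantum `sl₂`. -/
inductive G5 : Type | e | f | k | k' | l

open FreeAlgebra in
/-- The defining relations of mirabolic quantum `sl₂`. -/
inductive Rel : FreeAlgebra K G5 → FreeAlgebra K G5 → Prop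
  | kk'  : Rel (ι K G5.k * ι K G5.k') 1
  | k'k  : Rel (ι K G5.k' * ι K G5.k) 1
  | kek' : Rel (ι K G5.k * ι K G5.e * ι K G5.k') ((vv ^ 2) • ι K G5.e)
  | kfk' : Rel (ι K G5.k * ι K G5.f * ι K G5.k') ((vv ^ (-2 : ℤ)) • ι K G5.f)
  | effe : Rel (ι K G5.e * ι K G5.f - ι K G5.f * ι K G5.e)
      (((vv - vv⁻¹)⁻¹) • (ι K G5.k - ι K G5.k'))
  | ll   : Rel (ι K G5.l * ι K G5.l) (ι K G5.l)
  | kl   : Rel (ι K G5.k * ι K G5.l) (ι K G5.l * ι K G5.k)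
  | lel  : Rel (ι K G5.l * ι K G5.e * ι K G5.l) (ι K G5.l * ι K G5.e)
  | lfl  : Rel (ι K G5.l * ι K G5.f * ι K G5.l) (ι K G5.f * ι K G5.l)
  | serreE : Rel ((vv + vv⁻¹) • (ι K G5.e * ι K G5.l * ι K G5.e))
      (vv⁻¹ • (ι K G5.e * ι K G5.e * ι K G5.l) + vv • (ι K G5.l * (ι K G5.e * ι K G5.e)))
  | serreF : Rel ((vv + vv⁻¹) • (ι K G5.f * ι K G5.l * ι K G5.f))
      (vv⁻¹ • (ι K G5.l * (ι K G5.f * ι K G5.f)) + vv • (ι K G5.f * ι K G5.f * ι K G5.l))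

/-- Mirabolic quantum `sl₂`: the unital `K`-algebra presented by the generators
`e, f, k, k⁻¹, ℓ` and the relations `Rel`. -/
abbrev MU2 : Type := RingQuot Rel

/-- The generator `e` of `MU_v(2)`. -/
def Ee : MU2 := RingQuot.mkAlgHom K Rel (FreeAlgebra.ι K G5.e)
/-- The generator `f` of `MU_v(2)`. -/
def Ff : MU2 := RingQuot.mkAlgHom K Rel (FreeAlgebra.ι K G5.f)
/-- The generator `k` of `MU_v(2)`. -/
def Kk : MU2 := RingQuot.mkAlgHom K Rel (FreeAlgebra.ι K G5.k)
/-- The generator `k⁻¹` of `MU_v(2)`. -/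
def Kk' : MU2 := RingQuot.mkAlgHom K Rel (FreeAlgebra.ι K G5.k')
/-- The generator `ℓ` of `MU_v(2)`. -/
def Ll : MU2 := RingQuot.mkAlgHom K Rel (FreeAlgebra.ι K G5.l)


/-! ### Auxiliary scalar lemmas -/

lemma vv_ne : vv ≠ 0 := RatFunc.X_ne_zero

lemma vv_pow_ne_one {k : ℕ} (hk : 0 < k) : vv ^ k ≠ 1 := by
  intro h
  have hinj := IsFractionRing.injective (Polynomial ℂ) K
  have h2 : (Polynomial.X : Polynomial ℂ) ^ k = 1 := by
    apply hinj
    rw [map_pow, map_one, RatFunc.algebraMap_X]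
    exact h
  have := congrArg Polynomial.natDegree h2
  simp [Polynomial.natDegree_X_pow] at this
  omega

lemma vv_zpow_ne_one {k : ℤ} (hk : 0 < k) : vv ^ k ≠ 1 := by
  lift k to ℕ using le_of_lt hk
  rw [zpow_natCast]
  exact vv_pow_ne_one (by exact_mod_cast hk)

lemma hd : vv - vv⁻¹ ≠ 0 := by
  intro h
  have h1 : vv = vv⁻¹ := sub_eq_zero.mp h
  have h2 : vv ^ (2:ℕ) = 1 := by
    rw [pow_two]; nth_rewrite 2 [h1]; exact mul_inv_cancel₀ vv_ne
  exact vv_pow_ne_one (by norm_num) h2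

lemma qn_zero : qn 0 = 0 := by simp [qn]

lemma qn_one : qn 1 = 1 := by
  rw [qn, zpow_one, zpow_neg, zpow_one, div_self hd]

lemma qn_two : qn 2 = vv + vv⁻¹ := by
  rw [qn, eq_comm, eq_div_iff hd]
  simp only [zpow_neg, zpow_two]
  field_simp
  ring

lemma qn_ne_zero {m : ℤ} (hm : 0 < m) : qn m ≠ 0 := by
  rw [qn, div_ne_zero_iff]
  refine ⟨?_, hd⟩
  intro h
  have h1 : vv ^ m = vv ^ (-m) := sub_eq_zero.mp h
  have h2 : vv ^ (2*m) = 1 := by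
    rw [two_mul, zpow_add₀ vv_ne]
    nth_rewrite 1 [h1]
    rw [← zpow_add₀ vv_ne]
    simp
  exact vv_zpow_ne_one (by omega) h2

lemma qn_rec (m : ℤ) : qn (m + 1) = qn 2 * qn m - qn (m - 1) := by
  have hs : vv ^ m ≠ 0 := zpow_ne_zero m vv_ne
  rw [qn_two, qn, qn, qn]
  simp only [neg_add, neg_sub, zpow_add₀ vv_ne, zpow_sub₀ vv_ne, zpow_neg, zpow_one]
  generalize hg : vv ^ m = s at hs ⊢
  have hv := vv_ne
  have hdd := hd
  field_simp
  ring

lemma sc2 (a b : ℕ) :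
    qn ((b:ℤ)+1) * qn ((a:ℤ)+(b:ℤ)) = qn (b:ℤ) * qn ((a:ℤ)+(b:ℤ)+1) + qn (a:ℤ) := by
  induction b with
  | zero => simp [qn_zero, qn_one]
  | succ b ih =>
    have e1 := qn_rec ((b:ℤ)+1)
    have e2 := qn_rec ((a:ℤ)+(b:ℤ)+1)
    push_cast
    ring_nf at e1 e2 ih ⊢
    linear_combination qn (1+(b:ℤ)+(a:ℤ)) * e1 - qn (1+(b:ℤ)) * e2 + ih

lemma sc1 (n : ℕ) : qn (n:ℤ) * qn ((n:ℤ)+2) = qn ((n:ℤ)+1) * qn ((n:ℤ)+1) - 1 := by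
  have h := sc2 1 n
  push_cast at h
  ring_nf at h ⊢
  rw [qn_one] at h
  linear_combination -h

/-! ### Abstract module-combination lemmas (over a generic field, where `match_scalars` works) -/

section Abstract
variable {k : Type} [Field k] {M : Type} [AddCommGroup M] [Module k M]

lemma nzsd : NoZeroSMulDivisors k M := by
  constructor
  intro c x h
  by_cases hc : c = 0
  · exact Or.inl hc
  · refine Or.inr ?_
    calc x = c⁻¹ • (c • x) := (inv_smul_smul₀ hc x).symm
    _ = 0 := by rw [h, smul_zero]

lemma genstep (u α β γ δ : k) (X Y A B : M)
    (h1 : u • X = α • A + β • Y) (h2 : u • Y = γ • X + δ • B) :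
    ((u*u - β*γ) • X = (u*α) • A + (β*δ) • B) ∧
    ((u*u - β*γ) • Y = (γ*α) • A + (u*δ) • B) := by
  constructor
  · linear_combination (norm := module) u • h1 + β • h2
  · linear_combination (norm := module) u • h2 + γ • h1

lemma genstep2 (t u α β γ δ : k) (X Y A B : M)
    (h1 : t • X = α • Y + β • B) (h2 : u • Y = γ • A + δ • B) :
    (t*u) • X = (α*γ) • A + (α*δ + u*β) • B := by
  linear_combination (norm := module) u • h1 + α • h2

lemma scale_eq (s : k) (hs : s ≠ 0) {e f g e' f' g' : k} {X A B : M}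
    (he : s * e' = e) (hf : s * f' = f) (hg : s * g' = g)
    (h : e • X = f • A + g • B) : e' • X = f' • A + g' • B := by
  haveI := nzsd (k := k) (M := M)
  refine smul_right_injective M hs ?_
  show s • (e' • X) = s • (f' • A + g' • B)
  rw [smul_add, smul_smul, smul_smul, smul_smul, he, hf, hg, h]

end Abstract

/-! ### The main computation -/

def Pp (w : K) (x l : MU2) (a b : ℕ) : Prop :=
  qn ((a : ℤ) + b) • (x ^ a * l * x ^ b)
    = (w ^ (-(b : ℤ)) * qn a) • (x ^ (a + b) * l) + (w ^ (a : ℤ) * qn b) • (l * x ^ (a + b))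

lemma main_general (w : K) (x l : MU2) (hw : w ≠ 0)
    (serre : qn 2 • (x * l * x) = w⁻¹ • (x * x * l) + w • (l * (x * x))) (a b : ℕ) :
    Pp w x l a b := by
  have mulML : ∀ p q : ℕ, x * (x ^ p * l * x ^ q) = x ^ (p+1) * l * x ^ q := by
    intro p q; rw [← mul_assoc, ← mul_assoc, ← pow_succ']
  have mulAL : ∀ p : ℕ, x * (x ^ p * l) = x ^ (p+1) * l := by
    intro p; rw [← mul_assoc, ← pow_succ']
  have mulBL : ∀ p : ℕ, x * (l * x ^ p) = x ^ 1 * l * x ^ p := by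
    intro p; rw [← mul_assoc, pow_one]
  have mulMR : ∀ p q : ℕ, (x ^ p * l * x ^ q) * x = x ^ p * l * x ^ (q+1) := by
    intro p q; rw [mul_assoc, ← pow_succ]
  have mulAR : ∀ p : ℕ, (x ^ p * l) * x = x ^ p * l * x ^ 1 := by
    intro p; rw [pow_one]
  have mulBR : ∀ p : ℕ, (l * x ^ p) * x = l * x ^ (p+1) := by
    intro p; rw [mul_assoc, ← pow_succ]
  have base_a0 : ∀ p : ℕ, Pp w x l p 0 := by
    intro p; unfold Pp; simp [qn_zero]
  have base_0b : ∀ p : ℕ, Pp w x l 0 p := by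
    intro p; unfold Pp; simp [qn_zero]
  have p11 : Pp w x l 1 1 := by
    unfold Pp
    push_cast
    norm_num [qn_one, zpow_one, zpow_neg_one]
    simpa [pow_one, pow_two] using serre
  have QR : ∀ n : ℕ, Pp w x l n 1 ∧ Pp w x l 1 n := by
    intro n
    induction n with
    | zero => exact ⟨base_0b 1, base_a0 1⟩
    | succ n ih =>
      rcases Nat.eq_zero_or_pos n with rfl | hn
      · exact ⟨p11, p11⟩
      obtain ⟨q, r⟩ := ih
      have ht : qn (n:ℤ) ≠ 0 := qn_ne_zero (by exact_mod_cast hn)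
      have k1 := sc1 n
      have h1' := congrArg (fun z => x * z) q
      have h2' := congrArg (fun z => z * x) r
      unfold Pp at h1' h2' ⊢
      simp only [mul_add, mul_smul_comm, mulML, mulAL, mulBL] at h1'
      simp only [add_mul, smul_mul_assoc, mulMR, mulAR, mulBR] at h2'
      push_cast at h1' h2' ⊢
      simp only [qn_one, mul_one, one_mul, zpow_one] at h1' h2' ⊢
      ring_nf at k1 h1' h2' ⊢
      have hzc0 : w ^ ((n:ℤ)) * w ^ (-(n:ℤ)) = 1 := by
        rw [← zpow_add₀ hw]; simp
      have hzc1 : w ^ ((n:ℤ)) * w = w ^ (1+(n:ℤ)) := by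
        rw [zpow_add₀ hw, zpow_one]; ring
      have hzc2 : w ^ (-(n:ℤ)) * w ^ (-1:ℤ) = w ^ (-1-(n:ℤ)) := by
        rw [← zpow_add₀ hw]; ring_nf
      have hg := genstep (k := K) (M := MU2) _ _ _ _ _ _ _ _ _ h1' h2'
      constructor
      · refine scale_eq (k := K) (M := MU2) (qn (n:ℤ)) ht ?_ ?_ ?_ hg.1
        · linear_combination k1 + hzc0
        · ring
        · linear_combination (-(qn (n:ℤ))) * hzc1
      · refine scale_eq (k := K) (M := MU2) (qn (n:ℤ)) ht ?_ ?_ ?_ hg.2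
        · linear_combination k1 + hzc0
        · linear_combination (-(qn (n:ℤ))) * hzc2
        · ring
  induction b with
  | zero => exact base_a0 a
  | succ b ihb =>
    rcases Nat.eq_zero_or_pos a with rfl | ha
    · exact base_0b (b+1)
    have ht : qn ((b:ℤ)+(a:ℤ)) ≠ 0 := qn_ne_zero (by
      have h0 : 0 < b + a := Nat.add_pos_right b ha
      exact_mod_cast h0)
    have h4 := (QR (a+b)).1
    have h3' := congrArg (fun z => z * x) ihb
    unfold Pp at h3' h4 ⊢
    simp only [add_mul, smul_mul_assoc, mulMR, mulAR, mulBR] at h3'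
    push_cast at h3' h4 ⊢
    simp only [qn_one, mul_one, one_mul, zpow_one] at h3' h4 ⊢
    have k2 := sc2 a b
    ring_nf at k2 h3' h4 ht ⊢
    have hzc2 : w ^ (-(b:ℤ)) * w ^ (-1:ℤ) = w ^ (-1-(b:ℤ)) := by
      rw [← zpow_add₀ hw]; ring_nf
    have hzc3 : w ^ (-(b:ℤ)) * w ^ ((b:ℤ)+(a:ℤ)) = w ^ ((a:ℤ)) := by
      rw [← zpow_add₀ hw]; ring_nf
    have hg2 := genstep2 (k := K) (M := MU2) _ _ _ _ _ _ _ _ _ _ h3' h4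
    refine scale_eq (k := K) (M := MU2) _ ht ?_ ?_ ?_ hg2
    · ring
    · linear_combination (-(qn ((b:ℤ)+(a:ℤ))) * qn ((a:ℤ))) * hzc2
    · linear_combination (w ^ ((a:ℤ))) * k2 - qn ((a:ℤ)) * hzc3

/-- Lemma 4.4: for all `a, b ∈ ℕ`,
`[a+b]·e^a ℓ e^b = v^{-b}[a]·e^{a+b} ℓ + v^{a}[b]·ℓ e^{a+b}`, and
`[a+b]·f^a ℓ f^b = v^{b}[a]·f^{a+b} ℓ + v^{-a}[b]·ℓ f^{a+b}`. -/
theorem move_out (a b : ℕ) :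
    (qn ((a : ℤ) + b) • (Ee ^ a * Ll * Ee ^ b)
      = (vv ^ (-(b : ℤ)) * qn a) • (Ee ^ (a + b) * Ll)
        + (vv ^ (a : ℤ) * qn b) • (Ll * Ee ^ (a + b))) ∧
    (qn ((a : ℤ) + b) • (Ff ^ a * Ll * Ff ^ b)
      = (vv ^ (b : ℤ) * qn a) • (Ff ^ (a + b) * Ll)
        + (vv ^ (-(a : ℤ)) * qn b) • (Ll * Ff ^ (a + b))) := by
  have hrelE := RingQuot.mkAlgHom_rel K Rel.serreE
  have hrelF := RingQuot.mkAlgHom_rel K Rel.serreF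
  simp only [map_smul, map_mul, map_add] at hrelE hrelF
  constructor
  · have h := main_general vv Ee Ll vv_ne (by rw [qn_two]; exact hrelE) a b
    unfold Pp at h
    exact h
  · have h := main_general vv⁻¹ Ff Ll (inv_ne_zero vv_ne)
      (by rw [qn_two, inv_inv]; exact hrelF.trans (add_comm _ _)) a b
    unfold Pp at h
    have e1 : (vv⁻¹ : K) ^ (-(b:ℤ)) = vv ^ (b:ℤ) := by
      rw [inv_zpow, ← zpow_neg, neg_neg]
    have e2 : (vv⁻¹ : K) ^ ((a:ℤ)) = vv ^ (-(a:ℤ)) := by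
      rw [inv_zpow, ← zpow_neg]
    rw [e1, e2] at h
    exact h

end

end MirabolicSL2
end
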